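/- Let A ∈ ℝ^{m×n}, let Ḡ ∈ ℝ^{m×k} and H̄ ∈ ℝ^{n×ℓ} be full-column-rank matrices, set A_x = H̄⁺AᵀḠ, A_y = Ḡ⁺AH̄ and M = [[0, A_x],[A_y, 0]], and assume ρ(A_y A_x) > 0 and set λ = −√(ρ(A_y A_x)). Let U be a matrix whose columns form a basis of the ρ(A_y A_x)-eigenspace of A_y A_x, and let V be a matrix with orthonormal columns spanning the column space of the stacked matrix [A_x U/λ ; U]. Then min{‖(VVᵀ − I)z‖ : z ≥ 0, eᵀz = 1} = 0 if and only if there exists a nonzero vector z̄ ∈ ℝ^{ℓ+k} with z̄ ≥ 0 and M z̄ = λ z̄. -/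

import Mathlib

/-!
Since `Vᵀ V = I`, the matrix `V Vᵀ - I` vanishes exactly on the column space of `V`, which is
the range of `[A_x U/λ ; U]`. A vector `(x, y)` is a `λ`-eigenvector of `M` iff `y` is a
`λ²`-eigenvector of `A_y A_x` and `x = A_x y / λ`, so that range is the whole `λ`-eigenspace
of `M`. The objective is continuous on the compact simplex, so its infimum is attained and is
zero iff the eigenspace meets the simplex, i.e. (after scaling) contains a nonzero
nonnegative vector.
-/

open Matrix

noncomputable def vnorm {α : Type*} [Fintype α] (v : α → ℝ) : ℝ := Real.sqrt (v ⬝ᵥ v)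

/-- Pseudoinverse of a full-column-rank matrix: `N⁺ = (NᵀN)⁻¹Nᵀ`. -/
noncomputable def pinv {α β : Type*} [Fintype α] [Fintype β] [DecidableEq β]
    (N : Matrix α β ℝ) : Matrix β α ℝ :=
  (Nᵀ * N)⁻¹ * Nᵀ

/-- Spectral radius of a real square matrix: the largest modulus of its (complex)
eigenvalues. -/
noncomputable def specRad {α : Type*} [Fintype α] [DecidableEq α]
    (C : Matrix α α ℝ) : ℝ :=
  sSup {r : ℝ | ∃ μ : ℂ, μ ∈ spectrum ℂ (C.map Complex.ofReal) ∧ r = ‖μ‖}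

lemma vnorm_eq_norm_toLp {α : Type*} [Fintype α] (v : α → ℝ) :
    vnorm v = ‖WithLp.toLp 2 v‖ := by
  simp [vnorm, EuclideanSpace.norm_eq, dotProduct, sq]

lemma continuous_vnorm {α : Type*} [Fintype α] : Continuous (vnorm : (α → ℝ) → ℝ) := by
  simp only [funext vnorm_eq_norm_toLp]
  fun_prop

lemma vnorm_eq_zero {α : Type*} [Fintype α] {v : α → ℝ} : vnorm v = 0 ↔ v = 0 := by
  simp [vnorm_eq_norm_toLp]

lemma vnorm_nonneg {α : Type*} [Fintype α] (v : α → ℝ) : 0 ≤ vnorm v := Real.sqrt_nonneg _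

lemma sInf_eq_zero_iff_zero_mem {S : Set ℝ} (hS : IsCompact S) (hne : S.Nonempty)
    (hnonneg : ∀ r ∈ S, 0 ≤ r) : sInf S = 0 ↔ 0 ∈ S :=
  ⟨fun h => h ▸ hS.sInf_mem hne, fun h0 => IsLeast.csInf_eq ⟨h0, hnonneg⟩⟩

lemma exists_mem_stdSimplex_inter_iff {ι : Type*} [Fintype ι] (K : Submodule ℝ (ι → ℝ)) :
    (∃ z ∈ stdSimplex ℝ ι, z ∈ K) ↔ ∃ z ≠ 0, (∀ i, 0 ≤ z i) ∧ z ∈ K := by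
  constructor
  · rintro ⟨z, ⟨hnonneg, hsum⟩, hK⟩
    refine ⟨z, ?_, hnonneg, hK⟩
    rintro rfl
    simp at hsum
  · rintro ⟨z, hz0, hnonneg, hK⟩
    have hpos : 0 < ∑ i, z i := by
      obtain ⟨i, hi⟩ := Function.ne_iff.mp hz0
      exact Finset.sum_pos' (fun j _ => hnonneg j)
        ⟨i, Finset.mem_univ i, (hnonneg i).lt_of_ne' hi⟩
    refine ⟨(∑ i, z i)⁻¹ • z, ⟨fun i => ?_, ?_⟩, K.smul_mem _ hK⟩
    · exact smul_nonneg (inv_nonneg.mpr hpos.le) (hnonneg i)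
    · simp only [Pi.smul_apply, smul_eq_mul, ← Finset.mul_sum]
      exact inv_mul_cancel₀ hpos.ne'

lemma mulVec_mul_transpose_sub_one_eq_zero_iff {R ι κ : Type*} [CommRing R] [Fintype ι]
    [Fintype κ] [DecidableEq ι] [DecidableEq κ] {V : Matrix ι κ R} (hV : Vᵀ * V = 1) (z : ι → R) :
    (V * Vᵀ - 1) *ᵥ z = 0 ↔ z ∈ LinearMap.range V.mulVecLin := by
  rw [sub_mulVec, one_mulVec, sub_eq_zero]
  constructor
  · intro h
    exact ⟨Vᵀ *ᵥ z, by rw [mulVecLin_apply, mulVec_mulVec, h]⟩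
  · rintro ⟨c, rfl⟩
    rw [mulVecLin_apply, mulVec_mulVec, Matrix.mul_assoc, hV, Matrix.mul_one]

section
variable {K : Type*} [Field K] {l k d : Type*} [Fintype l] [Fintype k] [Fintype d]

lemma fromBlocks_zero_mulVec_eq_smul_iff {Ax : Matrix l k K} {Ay : Matrix k l K} {lam : K}
    (hlam : lam ≠ 0) (z : l ⊕ k → K) :
    fromBlocks 0 Ax Ay 0 *ᵥ z = lam • z ↔
      (Ay * Ax) *ᵥ (z ∘ Sum.inr) = lam ^ 2 • (z ∘ Sum.inr) ∧
        z ∘ Sum.inl = lam⁻¹ • Ax *ᵥ (z ∘ Sum.inr) := by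
  obtain ⟨x, y, rfl⟩ : ∃ x y, z = Sum.elim x y := ⟨_, _, (Sum.elim_comp_inl_inr z).symm⟩
  have hsmul : lam • Sum.elim x y = Sum.elim (lam • x) (lam • y) := Sum.comp_elim (lam • ·) x y
  simp only [fromBlocks_mulVec, hsmul, zero_mulVec, zero_add, add_zero, Sum.elim_comp_inl,
    Sum.elim_comp_inr, Sum.elim_eq_iff]
  constructor
  · rintro ⟨hx, hy⟩
    refine ⟨?_, ?_⟩
    · rw [← mulVec_mulVec, hx, mulVec_smul, hy, smul_smul, sq]
    · rw [hx, inv_smul_smul₀ hlam]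
  · rintro ⟨hy, rfl⟩
    refine ⟨(smul_inv_smul₀ hlam _).symm, ?_⟩
    rw [mulVec_smul, mulVec_mulVec, hy, smul_smul, sq, inv_mul_cancel_left₀ hlam]

lemma range_fromRows_mulVecLin_eq_eigenspace {Ax : Matrix l k K} {Ay : Matrix k l K}
    {U : Matrix k d K} {lam : K} (hlam : lam ≠ 0)
    (hU : LinearMap.range U.mulVecLin = Module.End.eigenspace (Ay * Ax).mulVecLin (lam ^ 2)) :
    LinearMap.range (fromRows (lam⁻¹ • (Ax * U)) U).mulVecLin =
      Module.End.eigenspace (fromBlocks 0 Ax Ay 0).mulVecLin lam := by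
  ext z
  rw [Module.End.mem_eigenspace_iff, mulVecLin_apply, fromBlocks_zero_mulVec_eq_smul_iff hlam,
    ← mulVecLin_apply, ← Module.End.mem_eigenspace_iff, ← hU]
  constructor
  · rintro ⟨c, rfl⟩
    simp only [mulVecLin_apply, fromRows_mulVec, Sum.elim_comp_inl, Sum.elim_comp_inr, smul_mulVec,
      mulVec_mulVec]
    exact ⟨⟨c, rfl⟩, trivial⟩
  · rintro ⟨⟨c, hc⟩, hx⟩
    refine ⟨c, ?_⟩
    rw [mulVecLin_apply] at hc
    rw [mulVecLin_apply, fromRows_mulVec, smul_mulVec, ← mulVec_mulVec, hc, ← hx,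
      Sum.elim_comp_inl_inr]
end

lemma specRad_of_isEmpty {α : Type*} [Fintype α] [DecidableEq α] [IsEmpty α]
    (C : Matrix α α ℝ) : specRad C = 0 := by
  simp [specRad, spectrum.of_subsingleton]

lemma sInf_vnorm_mulVec_stdSimplex_eq_zero_iff {ι κ : Type*} [Fintype ι] [Fintype κ]
    [Nonempty ι] (B : Matrix κ ι ℝ) :
    sInf {r : ℝ | ∃ z : ι → ℝ, (∀ i, 0 ≤ z i) ∧ (∑ i, z i) = 1 ∧ r = vnorm (B *ᵥ z)} = 0 ↔
      ∃ z ≠ 0, (∀ i, 0 ≤ z i) ∧ B *ᵥ z = 0 := by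
  classical
  have hS : {r : ℝ | ∃ z : ι → ℝ, (∀ i, 0 ≤ z i) ∧ (∑ i, z i) = 1 ∧ r = vnorm (B *ᵥ z)} =
      (fun z => vnorm (B *ᵥ z)) '' stdSimplex ℝ ι := by
    ext r
    simp only [Set.mem_ofPred_eq, Set.mem_image, stdSimplex, eq_comm, and_assoc]
  have hcont : Continuous fun z : ι → ℝ => vnorm (B *ᵥ z) :=
    continuous_vnorm.comp B.mulVecLin.continuous_of_finiteDimensional
  rw [hS, sInf_eq_zero_iff_zero_mem ((isCompact_stdSimplex ℝ ι).image hcont)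
    ⟨_, _, single_mem_stdSimplex ℝ (Classical.arbitrary ι), rfl⟩
    (Set.forall_mem_image.mpr fun z _ => vnorm_nonneg _)]
  simpa only [Set.mem_image, vnorm_eq_zero, LinearMap.mem_ker, mulVecLin_apply] using
    exists_mem_stdSimplex_inter_iff (LinearMap.ker B.mulVecLin)

theorem stmt13_general {m n k l d d' : ℕ} (A : Matrix (Fin m) (Fin n) ℝ)
    (Gb : Matrix (Fin m) (Fin k) ℝ) (Hb : Matrix (Fin n) (Fin l) ℝ)
    (hrho : 0 < specRad (pinv Gb * A * Hb * (pinv Hb * Aᵀ * Gb)))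
    (lam : ℝ) (hlam : lam = -Real.sqrt (specRad (pinv Gb * A * Hb * (pinv Hb * Aᵀ * Gb))))
    (U : Matrix (Fin k) (Fin d) ℝ)
    (hUspan : Submodule.span ℝ (Set.range (fun j : Fin d => fun i => U i j)) =
      LinearMap.ker ((pinv Gb * A * Hb * (pinv Hb * Aᵀ * Gb)).mulVecLin -
        specRad (pinv Gb * A * Hb * (pinv Hb * Aᵀ * Gb)) •
          (LinearMap.id : (Fin k → ℝ) →ₗ[ℝ] (Fin k → ℝ))))
    (V : Matrix (Fin l ⊕ Fin k) (Fin d') ℝ)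
    (hVo : Vᵀ * V = 1)
    (hVspan : LinearMap.range V.mulVecLin =
      LinearMap.range (Matrix.fromRows (lam⁻¹ • (pinv Hb * Aᵀ * Gb * U)) U).mulVecLin) :
    sInf {r : ℝ | ∃ z : Fin l ⊕ Fin k → ℝ, (∀ i, 0 ≤ z i) ∧ (∑ i, z i) = 1 ∧
        r = vnorm ((V * Vᵀ - 1).mulVec z)} = 0 ↔
      ∃ zb : Fin l ⊕ Fin k → ℝ, zb ≠ 0 ∧ (∀ i, 0 ≤ zb i) ∧
        (Matrix.fromBlocks 0 (pinv Hb * Aᵀ * Gb) (pinv Gb * A * Hb) 0).mulVec zb =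
          lam • zb := by
  set Ax := pinv Hb * Aᵀ * Gb
  set Ay := pinv Gb * A * Hb
  set ρ := specRad (Ay * Ax)
  -- without this the feasible set would be empty, and `sInf ∅ = 0`
  have : Nonempty (Fin k) := by
    rw [← not_isEmpty_iff]
    intro
    exact hrho.ne' (specRad_of_isEmpty _)
  have hlam_sq : lam ^ 2 = ρ := by rw [hlam, neg_sq, Real.sq_sqrt hrho.le]
  have hlam_ne : lam ≠ 0 := by rw [hlam, neg_ne_zero]; exact (Real.sqrt_pos.mpr hrho).ne'
  have hU : LinearMap.range U.mulVecLin = Module.End.eigenspace (Ay * Ax).mulVecLin (lam ^ 2) := by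
    rw [Module.End.eigenspace_def, hlam_sq, range_mulVecLin]
    exact hUspan
  have hker : ∀ z, (V * Vᵀ - 1) *ᵥ z = 0 ↔
      z ∈ Module.End.eigenspace (fromBlocks 0 Ax Ay 0).mulVecLin lam := by
    intro z
    rw [mulVec_mul_transpose_sub_one_eq_zero_iff hVo, hVspan,
      range_fromRows_mulVecLin_eq_eigenspace hlam_ne hU]
  rw [sInf_vnorm_mulVec_stdSimplex_eq_zero_iff]
  simp only [hker, Module.End.mem_eigenspace_iff, mulVecLin_apply]

/-- With `A_x = H̄⁺AᵀḠ`, `A_y = Ḡ⁺AH̄`, `M = [[0,A_x],[A_y,0]]`, `ρ(A_y A_x) > 0`,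
`λ = −√ρ(A_y A_x)`, `U` a basis of the `ρ(A_y A_x)`-eigenspace of `A_y A_x`, and `V`
an orthonormal basis of the column space of `[A_x U/λ ; U]`:
`min{‖(VVᵀ − I)z‖ : z ≥ 0, eᵀz = 1} = 0` iff there is a nonzero `z̄ ≥ 0` with
`M z̄ = λ z̄`. -/
theorem stmt13 {m n k l d d' : ℕ} (A : Matrix (Fin m) (Fin n) ℝ)
    (Gb : Matrix (Fin m) (Fin k) ℝ) (Hb : Matrix (Fin n) (Fin l) ℝ)
    (hGrank : Gb.rank = k) (hHrank : Hb.rank = l)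
    (hrho : 0 < specRad (pinv Gb * A * Hb * (pinv Hb * Aᵀ * Gb)))
    (lam : ℝ) (hlam : lam = -Real.sqrt (specRad (pinv Gb * A * Hb * (pinv Hb * Aᵀ * Gb))))
    (U : Matrix (Fin k) (Fin d) ℝ)
    (hUli : LinearIndependent ℝ (fun j : Fin d => fun i => U i j))
    (hUspan : Submodule.span ℝ (Set.range (fun j : Fin d => fun i => U i j)) =
      LinearMap.ker ((pinv Gb * A * Hb * (pinv Hb * Aᵀ * Gb)).mulVecLin -
        specRad (pinv Gb * A * Hb * (pinv Hb * Aᵀ * Gb)) •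
          (LinearMap.id : (Fin k → ℝ) →ₗ[ℝ] (Fin k → ℝ))))
    (V : Matrix (Fin l ⊕ Fin k) (Fin d') ℝ)
    (hVo : Vᵀ * V = 1)
    (hVspan : LinearMap.range V.mulVecLin =
      LinearMap.range (Matrix.fromRows (lam⁻¹ • (pinv Hb * Aᵀ * Gb * U)) U).mulVecLin) :
    sInf {r : ℝ | ∃ z : Fin l ⊕ Fin k → ℝ, (∀ i, 0 ≤ z i) ∧ (∑ i, z i) = 1 ∧
        r = vnorm ((V * Vᵀ - 1).mulVec z)} = 0 ↔
      ∃ zb : Fin l ⊕ Fin k → ℝ, zb ≠ 0 ∧ (∀ i, 0 ≤ zb i) ∧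
        (Matrix.fromBlocks 0 (pinv Hb * Aᵀ * Gb) (pinv Gb * A * Hb) 0).mulVec zb =
          lam • zb :=
  stmt13_general A Gb Hb hrho lam hlam U hUspan V hVo hVspan
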